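/- arXiv:2405.06253 — 10 statements merged into one kernel-verified Lean document; each statement's English description precedes it below -/
import Mathlib

section
/- Consider an N-player aggregative game (N ≥ 2) in which all strategy sets K_i ⊆ ℝ^n and each cost function has the form f_i(x_i, x_{-i}) = f̃_i(x_i, g_i(x̄)) where x̄ = Σ_{j=1}^N x_j and g_i is some mapping on the Minkowski sum K̄ = Σ_i K_i. Suppose the game is not abnormal, i.e., for every player i there is no function C_i of x_{-i} alone with f_i(x_i, x_{-i}) = C_i(x_{-i}) for all x_i ∈ K_i and all x_{-i} ∈ K_{-i}. If 0 ∈ K, then the function y ↦ h_P(0, y) is not identically zero on K; that is, there exists y ∈ K with h_P(0, y) ≠ 0. -/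
/-!
Suppose `hP f 0` vanished on `K`. For `y ∈ K`, reset the last player's block of `y` to `0`: the
path from `0` to `y` and the path to the reset profile agree until the last player moves, so
`hP f 0` of the two differs by the last player's cost difference between them. Hence the last
player's cost does not depend on its own strategy, i.e. that player is abnormal.
-/

noncomputable section

def jointK {N : ℕ} {n : Fin N → ℕ}
    (K : ∀ i, Set (EuclideanSpace ℝ (Fin (n i)))) :
    Set (∀ i, EuclideanSpace ℝ (Fin (n i))) :=
  {x | ∀ i, x i ∈ K i}

def IsPotential {N : ℕ} {n : Fin N → ℕ}
    (K : ∀ i, Set (EuclideanSpace ℝ (Fin (n i))))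
    (f : Fin N → (∀ i, EuclideanSpace ℝ (Fin (n i))) → ℝ)
    (φ : (∀ i, EuclideanSpace ℝ (Fin (n i))) → ℝ) : Prop :=
  ∀ i : Fin N, ∀ x ∈ jointK K, ∀ xi' ∈ K i,
    f i (Function.update x i xi') - f i x = φ (Function.update x i xi') - φ x

def IsPotentialGame {N : ℕ} {n : Fin N → ℕ}
    (K : ∀ i, Set (EuclideanSpace ℝ (Fin (n i))))
    (f : Fin N → (∀ i, EuclideanSpace ℝ (Fin (n i))) → ℝ) : Prop :=
  ∃ φ, IsPotential K f φ

/-- The point on the path from `z` to `z + y` whose first `m` blocks are `z j + y j`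
and whose remaining blocks are `z j`. -/
def upTo {N : ℕ} {n : Fin N → ℕ}
    (z y : ∀ i, EuclideanSpace ℝ (Fin (n i))) (m : ℕ) :
    ∀ i, EuclideanSpace ℝ (Fin (n i)) :=
  fun j => if (j : ℕ) < m then z j + y j else z j

/-- `hP f z y` : the sum of the players' incremental cost differences along the path
`z → (z₁+y₁, z₋₁) → (z₁+y₁, z₂+y₂, …) → ⋯ → z+y`. -/
def hP {N : ℕ} {n : Fin N → ℕ}
    (f : Fin N → (∀ i, EuclideanSpace ℝ (Fin (n i))) → ℝ)
    (z y : ∀ i, EuclideanSpace ℝ (Fin (n i))) : ℝ :=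
  ∑ i : Fin N, (f i (upTo z y ((i : ℕ) + 1)) - f i (upTo z y (i : ℕ)))

variable {N : ℕ} {n : Fin N → ℕ}

theorem update_mem_jointK {K : ∀ i, Set (EuclideanSpace ℝ (Fin (n i)))}
    {x : ∀ i, EuclideanSpace ℝ (Fin (n i))} (hx : x ∈ jointK K) {i : Fin N}
    {a : EuclideanSpace ℝ (Fin (n i))} (ha : a ∈ K i) :
    Function.update x i a ∈ jointK K := by
  intro j
  rcases eq_or_ne j i with rfl | hj
  · simpa using ha
  · simpa [Function.update_of_ne hj] using hx j

theorem upTo_congr {z y y' : ∀ i, EuclideanSpace ℝ (Fin (n i))} {m : ℕ}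
    (h : ∀ j : Fin N, (j : ℕ) < m → y j = y' j) : upTo z y m = upTo z y' m := by
  funext j
  by_cases hj : (j : ℕ) < m <;> simp [upTo, hj, h j]

theorem upTo_of_le (z y : ∀ i, EuclideanSpace ℝ (Fin (n i))) {m : ℕ} (hm : N ≤ m) :
    upTo z y m = z + y := by
  funext j
  simp [upTo, show (j : ℕ) < m by omega]

theorem hP_sub_hP_of_eq_of_ne_last (f : Fin N → (∀ i, EuclideanSpace ℝ (Fin (n i))) → ℝ)
    (z : ∀ i, EuclideanSpace ℝ (Fin (n i))) {y y' : ∀ i, EuclideanSpace ℝ (Fin (n i))}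
    {i : Fin N} (hi : (i : ℕ) + 1 = N) (hyy' : ∀ j ≠ i, y j = y' j) :
    hP f z y - hP f z y' = f i (z + y) - f i (z + y') := by
  have hinit : ∀ m ≤ (i : ℕ), upTo z y m = upTo z y' m := fun m hm =>
    upTo_congr fun j hj => hyy' j (Fin.ne_of_lt (by simp only [Fin.lt_def]; omega))
  rw [hP, hP, ← Finset.sum_sub_distrib, Finset.sum_eq_single i]
  · rw [hinit i le_rfl, hi, upTo_of_le z y le_rfl, upTo_of_le z y' le_rfl]
    ring
  · intro k _ hk
    have hki : (k : ℕ) < i := by have := k.isLt; have := Fin.val_ne_of_ne hk; omega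
    rw [hinit k hki.le, hinit (k + 1) hki]
    ring
  · simp

theorem update_last_eq_of_hP_zero_eq_zero {K : ∀ i, Set (EuclideanSpace ℝ (Fin (n i)))}
    {f : Fin N → (∀ i, EuclideanSpace ℝ (Fin (n i))) → ℝ} (h0 : 0 ∈ jointK K)
    (hzero : ∀ y ∈ jointK K, hP f 0 y = 0) {i : Fin N} (hi : (i : ℕ) + 1 = N)
    {x : ∀ i, EuclideanSpace ℝ (Fin (n i))} (hx : x ∈ jointK K)
    {a : EuclideanSpace ℝ (Fin (n i))} (ha : a ∈ K i) :
    f i (Function.update x i a) = f i x := by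
  have hreset : ∀ y ∈ jointK K, f i y = f i (Function.update y i 0) := fun y hy => by
    have hdiff := hP_sub_hP_of_eq_of_ne_last f 0 hi
      (fun j hj => (Function.update_of_ne hj (0 : EuclideanSpace ℝ (Fin (n i))) y).symm)
    rw [hzero y hy, hzero _ (update_mem_jointK hy (a := 0) (h0 i)), zero_add, zero_add] at hdiff
    linarith
  rw [hreset _ (update_mem_jointK hx ha), Function.update_idem, ← hreset x hx]

theorem stmt4_general {N : ℕ} {nDim : ℕ} (hN : 2 ≤ N)
    (K : Fin N → Set (EuclideanSpace ℝ (Fin nDim)))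
    (f : Fin N → ((Fin N → EuclideanSpace ℝ (Fin nDim))) → ℝ)
    (h0 : (0 : Fin N → EuclideanSpace ℝ (Fin nDim)) ∈ jointK (n := fun _ => nDim) K)
    (hnab : ∀ i : Fin N,
      ¬ (∀ x ∈ jointK (n := fun _ => nDim) K, ∀ xi' ∈ K i,
          f i (Function.update x i xi') = f i x)) :
    ∃ y ∈ jointK (n := fun _ => nDim) K, hP (n := fun _ => nDim) f 0 y ≠ 0 := by
  by_contra! hzero
  exact hnab ⟨N - 1, by omega⟩ fun x hx a ha =>
    update_last_eq_of_hP_zero_eq_zero h0 hzero (by simp only; omega) hx ha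

/-- In an aggregative game (`N ≥ 2`, common strategy dimension `n`,
`f i x = f̃ i (x i) (g i (∑ j, x j))`) that is not abnormal (no player's cost is
independent of its own action on `K`), if `0 ∈ K` then `y ↦ h_P(0,y)` is not
identically zero on `K`. -/
theorem stmt4 {N : ℕ} {nDim : ℕ} (hN : 2 ≤ N)
    (K : Fin N → Set (EuclideanSpace ℝ (Fin nDim)))
    (f : Fin N → ((Fin N → EuclideanSpace ℝ (Fin nDim))) → ℝ)
    (m : Fin N → ℕ)
    (g : ∀ i : Fin N, EuclideanSpace ℝ (Fin nDim) → EuclideanSpace ℝ (Fin (m i)))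
    (ft : ∀ i : Fin N, EuclideanSpace ℝ (Fin nDim) → EuclideanSpace ℝ (Fin (m i)) → ℝ)
    (hagg : ∀ (i : Fin N) (x : Fin N → EuclideanSpace ℝ (Fin nDim)),
      f i x = ft i (x i) (g i (∑ j, x j)))
    (h0 : (0 : Fin N → EuclideanSpace ℝ (Fin nDim)) ∈ jointK (n := fun _ => nDim) K)
    (hnab : ∀ i : Fin N,
      ¬ (∀ x ∈ jointK (n := fun _ => nDim) K, ∀ xi' ∈ K i,
          f i (Function.update x i xi') = f i x)) :
    ∃ y ∈ jointK (n := fun _ => nDim) K, hP (n := fun _ => nDim) f 0 y ≠ 0 :=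
  stmt4_general hN K f h0 hnab
end
end

section
/- Consider an N-player aggregative game (N ≥ 2) in which all strategy sets K_i ⊆ ℝ^n and each cost function has the form f_i(x_i, x_{-i}) = f̃_i(x_i, g_i(x̄)) where x̄ = Σ_{j=1}^N x_j, and suppose each cost function f_i is defined on all of ℝ^{nN}. If the game is not abnormal, i.e., no player i has f_i(x_i, x_{-i}) = C_i(x_{-i}) for some function C_i of x_{-i} alone, then the function y ↦ h_P(0, y) is not identically zero on ℝ^{nN}; that is, there exists y ∈ ℝ^{nN} with h_P(0, y) ≠ 0. -/
noncomputable section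

/- Let players `0` and `1` move, to `s` and `b`, and everyone else stay at `0`. Then
`h_P(0, y)` is player `0`'s increment, which does not see `b`, plus player `1`'s increment
`f₁(s, b, 0, …) - f₁(s, 0, …)`. So if `h_P(0, ·)` vanishes, `f₁(s, b, 0, …)` does not depend
on `b`. In an aggregative game every profile `x` is, for player `1`, equivalent to
`(x̄ - x₁, x₁, 0, …)`, which has the same own action and the same aggregate; hence `f₁`
would not depend on player `1`'s action at all, i.e. the game would be abnormal. -/

lemma Finset.sum_update_sub_eq {ι E : Type*} [Fintype ι] [DecidableEq ι] [AddCommGroup E]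
    (x : ι → E) (i : ι) (v : E) :
    ∑ j, Function.update x i v j - v = ∑ j, x j - x i := by
  rw [Finset.sum_update_of_mem (Finset.mem_univ i), add_sub_cancel_left,
    Finset.sum_eq_sum_sdiff_singleton_add (Finset.mem_univ i) x, add_sub_cancel_right]

lemma upTo_eq_upTo_of_vanish_from {N : ℕ} {n : Fin N → ℕ} {z y : ∀ i, EuclideanSpace ℝ (Fin (n i))} {k l : ℕ}
    (hy : ∀ j : Fin N, k ≤ (j : ℕ) → y j = 0) (hkl : k ≤ l) :
    upTo z y l = upTo z y k := by
  funext j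
  by_cases hjk : (j : ℕ) < k
  · simp [upTo, hjk, hjk.trans_le hkl]
  · by_cases hjl : (j : ℕ) < l <;> simp [upTo, hjk, hjl, hy j (not_lt.mp hjk)]

section TwoMovers

variable {M : ℕ} {n : Fin (M + 2) → ℕ}

lemma hP_eq_of_vanish_from_two (f : Fin (M + 2) → (∀ i, EuclideanSpace ℝ (Fin (n i))) → ℝ)
    (z y : ∀ i, EuclideanSpace ℝ (Fin (n i))) (hy : ∀ j : Fin (M + 2), 2 ≤ (j : ℕ) → y j = 0) :
    hP f z y = (f 0 (upTo z y 1) - f 0 (upTo z y 0)) + (f 1 (upTo z y 2) - f 1 (upTo z y 1)) := by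
  have hrest : ∀ i : Fin M,
      f i.succ.succ (upTo z y (i + 2 + 1)) - f i.succ.succ (upTo z y (i + 2)) = 0 := fun i => by
    rw [upTo_eq_upTo_of_vanish_from (l := i + 2 + 1) hy (by omega),
      upTo_eq_upTo_of_vanish_from (l := i + 2) hy (by omega), sub_self]
  simp only [hP, Fin.sum_univ_succ (n := M + 1), Fin.sum_univ_succ (n := M), Fin.val_succ,
    hrest, Finset.sum_const_zero, add_zero]
  rfl

lemma hP_zero_single_add_single (f : Fin (M + 2) → (∀ i, EuclideanSpace ℝ (Fin (n i))) → ℝ)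
    (s : EuclideanSpace ℝ (Fin (n 0))) (b : EuclideanSpace ℝ (Fin (n 1))) :
    hP f 0 (Pi.single 0 s + Pi.single 1 b) =
      (f 0 (Pi.single 0 s) - f 0 0) +
        (f 1 (Pi.single 0 s + Pi.single 1 b) - f 1 (Pi.single 0 s)) := by
  set y : ∀ i, EuclideanSpace ℝ (Fin (n i)) := Pi.single 0 s + Pi.single 1 b with hy_def
  have hy : ∀ j : Fin (M + 2), 2 ≤ (j : ℕ) → y j = 0 := fun j hj => by
    have h0 : j ≠ 0 := by rintro rfl; simp at hj
    have h1 : j ≠ 1 := by rintro rfl; simp at hj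
    simp [hy_def, h0, h1]
  have h0 : upTo 0 y 0 = 0 := by
    funext j; simp [upTo]
  have h1 : upTo 0 y 1 = Pi.single 0 s := by
    funext j
    by_cases hj : j = 0
    · subst hj; simp [upTo, hy_def]
    · have : ¬ (j : ℕ) < 1 := fun h => hj (Fin.ext (by rw [Fin.val_zero]; omega))
      simp [upTo, this, hj]
  have h2 : upTo 0 y 2 = y := by
    funext j
    by_cases hj : (j : ℕ) < 2
    · simp [upTo, hj]
    · simp [upTo, hj, hy j (not_lt.mp hj)]
  rw [hP_eq_of_vanish_from_two f 0 _ hy, h0, h1, h2]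

end TwoMovers

theorem stmt5_general {N : ℕ} {nDim : ℕ} (hN : 2 ≤ N)
    (f : Fin N → ((Fin N → EuclideanSpace ℝ (Fin nDim))) → ℝ)
    (m : Fin N → ℕ)
    (g : ∀ i : Fin N, EuclideanSpace ℝ (Fin nDim) → EuclideanSpace ℝ (Fin (m i)))
    (ft : ∀ i : Fin N, EuclideanSpace ℝ (Fin nDim) → EuclideanSpace ℝ (Fin (m i)) → ℝ)
    (hagg : ∀ (i : Fin N) (x : Fin N → EuclideanSpace ℝ (Fin nDim)),
      f i x = ft i (x i) (g i (∑ j, x j)))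
    (hnab : ∀ i : Fin N,
      ¬ (∀ (x : Fin N → EuclideanSpace ℝ (Fin nDim)) (xi' : EuclideanSpace ℝ (Fin nDim)),
          f i (Function.update x i xi') = f i x)) :
    ∃ y : Fin N → EuclideanSpace ℝ (Fin nDim), hP (n := fun _ => nDim) f 0 y ≠ 0 := by
  obtain ⟨M, rfl⟩ : ∃ M, N = M + 2 := ⟨N - 2, by omega⟩
  by_contra! hP_zero
  have hconst : ∀ s b b' : EuclideanSpace ℝ (Fin nDim),
      f 1 (Pi.single 0 s + Pi.single 1 b) = f 1 (Pi.single 0 s + Pi.single 1 b') := by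
    intro s b b'
    have hb := hP_zero (Pi.single 0 s + Pi.single 1 b)
    have hb' := hP_zero (Pi.single 0 s + Pi.single 1 b')
    rw [hP_zero_single_add_single] at hb hb'
    linarith
  have hreduce : ∀ x : Fin (M + 2) → EuclideanSpace ℝ (Fin nDim),
      f 1 x = f 1 (Pi.single 0 (∑ j, x j - x 1) + Pi.single 1 (x 1)) := fun x => by
    rw [hagg, hagg]
    simp [Finset.sum_add_distrib]
  refine hnab 1 fun x xi' => ?_
  rw [hreduce x, hreduce (Function.update x 1 xi'), Function.update_self,
    Finset.sum_update_sub_eq]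
  exact hconst _ _ _

/-- In an aggregative game (`N ≥ 2`, common strategy dimension `n`,
`f i x = f̃ i (x i) (g i (∑ j, x j))`) whose costs are defined on all of `ℝ^{nN}`,
if the game is not abnormal (no player's cost is independent of its own action),
then `y ↦ h_P(0,y)` is not identically zero on `ℝ^{nN}`. -/
theorem stmt5 {N : ℕ} {nDim : ℕ} (hN : 2 ≤ N)
    (K : Fin N → Set (EuclideanSpace ℝ (Fin nDim)))
    (f : Fin N → ((Fin N → EuclideanSpace ℝ (Fin nDim))) → ℝ)
    (m : Fin N → ℕ)
    (g : ∀ i : Fin N, EuclideanSpace ℝ (Fin nDim) → EuclideanSpace ℝ (Fin (m i)))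
    (ft : ∀ i : Fin N, EuclideanSpace ℝ (Fin nDim) → EuclideanSpace ℝ (Fin (m i)) → ℝ)
    (hagg : ∀ (i : Fin N) (x : Fin N → EuclideanSpace ℝ (Fin nDim)),
      f i x = ft i (x i) (g i (∑ j, x j)))
    (hnab : ∀ i : Fin N,
      ¬ (∀ (x : Fin N → EuclideanSpace ℝ (Fin nDim)) (xi' : EuclideanSpace ℝ (Fin nDim)),
          f i (Function.update x i xi') = f i x)) :
    ∃ y : Fin N → EuclideanSpace ℝ (Fin nDim), hP (n := fun _ => nDim) f 0 y ≠ 0 :=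
  stmt5_general hN f m g ft hagg hnab
end
end

section
/- Consider an N-player game in which each cost function f_i is defined on all of ℝ^{n̄} (n̄ = Σ_i n_i) with strategy sets K_i ⊆ ℝ^{n_i}. Then the game is a potential game if and only if h_P(z, y) = h_P(0, z+y) − h_P(0, z) for all z, y ∈ ℝ^{n̄}; moreover, in that case the function φ(z) = C − h_P(z, −z) (for any constant C) is a potential function of the game. -/
noncomputable section

/-- `φ` is a global potential for the cost collection `f` (the potential property holds
on all of `ℝ^{n̄}`). -/
def IsGlobalPotential {N : ℕ} {n : Fin N → ℕ}
    (f : Fin N → (∀ i, EuclideanSpace ℝ (Fin (n i))) → ℝ)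
    (φ : (∀ i, EuclideanSpace ℝ (Fin (n i))) → ℝ) : Prop :=
  ∀ (i : Fin N) (x : ∀ j, EuclideanSpace ℝ (Fin (n j))) (xi' : EuclideanSpace ℝ (Fin (n i))),
    f i (Function.update x i xi') - f i x = φ (Function.update x i xi') - φ x

/-!
Walking from `z` to `z + y` one player at a time, each step changes a single block, so in the
presence of a potential `φ` the cost differences summed in `h_P` telescope:
`h_P(z, y) = φ(z + y) - φ(z)`. This gives the cocycle identity, and `φ(z) = φ(0) - h_P(z, -z)`.
Conversely, when `y` is supported on the block of player `i` only one step of the walk moves,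
so `h_P(x, y)` is player `i`'s cost change; the cocycle identity then says that `h_P(0, ·)` is a
potential.
-/

theorem update_eq_add_single_sub {ι : Type*} [DecidableEq ι] {β : ι → Type*}
    [∀ i, AddCommGroup (β i)] (x : ∀ i, β i) (i : ι) (a : β i) :
    Function.update x i a = x + Pi.single i (a - x i) := by
  rw [Pi.update_eq_sub_add_single, Pi.single_sub]
  abel

section

variable {N : ℕ} {n : Fin N → ℕ}

theorem upTo_zero (z y : ∀ i, EuclideanSpace ℝ (Fin (n i))) : upTo z y 0 = z := by
  funext j
  simp [upTo]

theorem upTo_top (z y : ∀ i, EuclideanSpace ℝ (Fin (n i))) : upTo z y N = z + y := by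
  funext j
  simp [upTo, j.isLt]

theorem upTo_succ (z y : ∀ i, EuclideanSpace ℝ (Fin (n i))) (i : Fin N) :
    upTo z y (i + 1) = Function.update (upTo z y i) i (z i + y i) := by
  funext j
  rcases eq_or_ne j i with rfl | hji
  · simp [upTo]
  · have hlt : (j : ℕ) < i + 1 ↔ (j : ℕ) < i := by
      have : (j : ℕ) ≠ i := Fin.val_ne_of_ne hji
      omega
    simp [upTo, Function.update_of_ne hji, hlt]

theorem upTo_single (x : ∀ i, EuclideanSpace ℝ (Fin (n i))) (i : Fin N)
    (d : EuclideanSpace ℝ (Fin (n i))) (m : ℕ) :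
    upTo x (Pi.single i d) m = if (i : ℕ) < m then x + Pi.single i d else x := by
  funext j
  rcases eq_or_ne j i with rfl | hji
  · split_ifs <;> simp [upTo, *]
  · split_ifs <;> simp [upTo, Pi.single_eq_of_ne hji]

variable {f : Fin N → (∀ i, EuclideanSpace ℝ (Fin (n i))) → ℝ}

theorem hP_single (x : ∀ i, EuclideanSpace ℝ (Fin (n i))) (i : Fin N)
    (d : EuclideanSpace ℝ (Fin (n i))) :
    hP f x (Pi.single i d) = f i (x + Pi.single i d) - f i x := by
  rw [hP, Finset.sum_eq_single i]
  · simp [upTo_single]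
  · intro j _ hji
    have hlt : (i : ℕ) < j + 1 ↔ (i : ℕ) < j := by
      have : (i : ℕ) ≠ j := Fin.val_ne_of_ne hji.symm
      omega
    simp [upTo_single, hlt]
  · simp

theorem IsGlobalPotential.hP_eq {φ : (∀ i, EuclideanSpace ℝ (Fin (n i))) → ℝ}
    (hφ : IsGlobalPotential f φ) (z y : ∀ i, EuclideanSpace ℝ (Fin (n i))) :
    hP f z y = φ (z + y) - φ z := by
  have hstep : ∀ i : Fin N, f i (upTo z y (i + 1)) - f i (upTo z y i) =
      φ (upTo z y (i + 1)) - φ (upTo z y i) := fun i => by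
    rw [upTo_succ]
    exact hφ i _ _
  rw [hP, Finset.sum_congr rfl fun i _ => hstep i,
    Fin.sum_univ_eq_sum_range (fun m => φ (upTo z y (m + 1)) - φ (upTo z y m)),
    Finset.sum_range_sub (fun m => φ (upTo z y m)), upTo_top, upTo_zero]

theorem IsGlobalPotential.add_const {φ : (∀ i, EuclideanSpace ℝ (Fin (n i))) → ℝ}
    (hφ : IsGlobalPotential f φ) (c : ℝ) : IsGlobalPotential f fun z => φ z + c := by
  intro i x a
  rw [hφ i x a]
  ring

theorem isGlobalPotential_hP_zero
    (H : ∀ z y : ∀ i, EuclideanSpace ℝ (Fin (n i)), hP f z y = hP f 0 (z + y) - hP f 0 z) :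
    IsGlobalPotential f (hP f 0) := by
  intro i x a
  have hcocycle := H x (Pi.single i (a - x i))
  rwa [hP_single, ← update_eq_add_single_sub] at hcocycle

end

theorem stmt7_general {N : ℕ} {n : Fin N → ℕ}
    (f : Fin N → (∀ i, EuclideanSpace ℝ (Fin (n i))) → ℝ) :
    ((∃ φ, IsGlobalPotential f φ) ↔
      ∀ z y : ∀ i, EuclideanSpace ℝ (Fin (n i)),
        hP f z y = hP f 0 (z + y) - hP f 0 z)
    ∧ ((∃ φ, IsGlobalPotential f φ) →
        ∀ C : ℝ, IsGlobalPotential f (fun z => C - hP f z (-z))) := by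
  refine ⟨⟨fun ⟨φ, hφ⟩ z y => ?_, fun H => ⟨hP f 0, isGlobalPotential_hP_zero H⟩⟩, ?_⟩
  · simp only [hφ.hP_eq, zero_add]
    ring
  · rintro ⟨φ, hφ⟩ C
    have hshift : (fun z => C - hP f z (-z)) = fun z => φ z + (C - φ 0) := by
      funext z
      rw [hφ.hP_eq, add_neg_cancel]
      ring
    rw [hshift]
    exact hφ.add_const _

/-- If the costs are defined on all of `ℝ^{n̄}`, the game is a potential
game iff `h_P(z,y) = h_P(0,z+y) − h_P(0,z)` for all `z, y ∈ ℝ^{n̄}`; moreover, in that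
case `φ(z) = C − h_P(z,−z)` is a potential function (for any constant `C`). -/
theorem stmt7 {N : ℕ} {n : Fin N → ℕ}
    (K : ∀ i, Set (EuclideanSpace ℝ (Fin (n i))))
    (f : Fin N → (∀ i, EuclideanSpace ℝ (Fin (n i))) → ℝ) :
    ((∃ φ, IsGlobalPotential f φ) ↔
      ∀ z y : ∀ i, EuclideanSpace ℝ (Fin (n i)),
        hP f z y = hP f 0 (z + y) - hP f 0 z)
    ∧ ((∃ φ, IsGlobalPotential f φ) →
        ∀ C : ℝ, IsGlobalPotential f (fun z => C - hP f z (-z))) :=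
  stmt7_general f
end
end

section
/- Consider an N-player game in which each cost function f_i is defined on all of ℝ^{n̄} (n̄ = Σ_i n_i) with strategy sets K_i ⊆ ℝ^{n_i}. Then the game is a potential game if and only if for all players i < j and all z_i, y_i ∈ ℝ^{n_i}, z_j, y_j ∈ ℝ^{n_j}, z_{-{i,j}} ∈ ℝ^{n̄ − n_i − n_j}, one has h_{ij}(z_i, z_j, y_i, y_j; z_{-{i,j}}) = h_{ij}(0, 0, z_i + y_i, z_j + y_j; z_{-{i,j}}) − h_{ij}(0, 0, z_i, z_j; z_{-{i,j}}). -/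
/-! With a potential `φ`, `hij f i j z yi yj` is the increment of `φ` from `z` to the profile where
`i` and `j` have moved to `z i + yi`, `z j + yj`, and the identity telescopes. Conversely, the
identity makes these two-step increments path-independent, so the cost changes around every closed
four-cycle in which only two players move cancel (the Monderer–Shapley condition). Under that
condition a potential is obtained by letting the players switch from `0` to `y` one after the other
and adding up their cost changes: a deviation of player `i` is carried through the later switches
by the four-cycles. -/

noncomputable section

/-- `hij f i j z yi yj` : the pairwise incremental cost difference
`f_i(z_i+y_i, z_j; z₋) − f_i(z_i, z_j; z₋) + f_j(z_j+y_j, z_i+y_i; z₋) − f_j(z_j, z_i+y_i; z₋)`. -/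
def hij {N : ℕ} {n : Fin N → ℕ}
    (f : Fin N → (∀ k, EuclideanSpace ℝ (Fin (n k))) → ℝ)
    (i j : Fin N) (z : ∀ k, EuclideanSpace ℝ (Fin (n k)))
    (yi : EuclideanSpace ℝ (Fin (n i))) (yj : EuclideanSpace ℝ (Fin (n j))) : ℝ :=
  f i (Function.update z i (z i + yi)) - f i z
    + f j (Function.update (Function.update z i (z i + yi)) j (z j + yj))
    - f j (Function.update z i (z i + yi))

open Function

section FourCycle

variable {N : ℕ} {X : Fin N → Type*}

/-- The cost changes along the closed path `z → (a, z_k) → (a, b) → (z_i, b) → z` sum to zero. -/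
def FourCycleCondition (f : Fin N → (∀ i, X i) → ℝ) : Prop :=
  ∀ i k : Fin N, i < k → ∀ (z : ∀ l, X l) (a : X i) (b : X k),
    (f i (update z i a) - f i z) + (f k (update (update z i a) k b) - f k (update z i a))
      + (f i (update z k b) - f i (update (update z i a) k b)) + (f k z - f k (update z k b)) = 0

def prefixProfile (x₀ y : ∀ i, X i) (m : ℕ) : ∀ i, X i :=
  fun l => if (l : ℕ) < m then y l else x₀ l

variable (x₀ : ∀ i, X i)

theorem prefixProfile_zero (y : ∀ i, X i) : prefixProfile x₀ y 0 = x₀ :=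
  funext fun _ => if_neg (Nat.not_lt_zero _)

theorem prefixProfile_self (y : ∀ i, X i) : prefixProfile x₀ y N = y :=
  funext fun l => if_pos l.isLt

theorem prefixProfile_succ (y : ∀ i, X i) {m : ℕ} (hm : m < N) :
    prefixProfile x₀ y (m + 1) = update (prefixProfile x₀ y m) ⟨m, hm⟩ (y ⟨m, hm⟩) := by
  funext l
  by_cases hl : l = ⟨m, hm⟩
  · subst hl
    simp [prefixProfile]
  · have hlm : (l : ℕ) < m + 1 ↔ (l : ℕ) < m := by
      have : (l : ℕ) ≠ m := fun h => hl (Fin.ext h)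
      omega
    simp [prefixProfile, update_of_ne hl, hlm]

theorem prefixProfile_update_of_le (y : ∀ i, X i) (i : Fin N) (a : X i) {m : ℕ}
    (hm : m ≤ i) : prefixProfile x₀ (update y i a) m = prefixProfile x₀ y m := by
  funext l
  by_cases hl : (l : ℕ) < m
  · have hli : l ≠ i := by rintro rfl; omega
    simp [prefixProfile, hl, update_of_ne hli]
  · simp [prefixProfile, hl]

theorem prefixProfile_update_of_lt (y : ∀ i, X i) (i : Fin N) (a : X i) {m : ℕ}
    (hm : (i : ℕ) < m) :
    prefixProfile x₀ (update y i a) m = update (prefixProfile x₀ y m) i a := by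
  funext l
  by_cases hl : l = i
  · subst hl
    simp [prefixProfile, hm]
  · simp [prefixProfile, update_of_ne hl]

variable (f : Fin N → (∀ i, X i) → ℝ)

def partialPotential (m : ℕ) (y : ∀ i, X i) : ℝ :=
  ∑ k ∈ Finset.univ.filter (fun k : Fin N => (k : ℕ) < m),
    (f k (prefixProfile x₀ y (k + 1)) - f k (prefixProfile x₀ y k))

theorem partialPotential_zero (y : ∀ i, X i) : partialPotential x₀ f 0 y = 0 := by
  simp [partialPotential]

theorem partialPotential_succ {m : ℕ} (hm : m < N) (y : ∀ i, X i) :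
    partialPotential x₀ f (m + 1) y = partialPotential x₀ f m y
      + (f ⟨m, hm⟩ (prefixProfile x₀ y (m + 1)) - f ⟨m, hm⟩ (prefixProfile x₀ y m)) := by
  have hfilter : Finset.univ.filter (fun k : Fin N => (k : ℕ) < m + 1)
      = insert ⟨m, hm⟩ (Finset.univ.filter (fun k : Fin N => (k : ℕ) < m)) := by
    ext k
    simp only [Finset.mem_filter, Finset.mem_univ, true_and, Finset.mem_insert, Fin.ext_iff]
    omega
  rw [partialPotential, hfilter, Finset.sum_insert (by simp), add_comm]
  rfl

variable {f}

/-- When player `m > i` switches after `i` has deviated, the four-cycle of `i` and `m` keeps the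
two sides equal. -/
theorem sub_eq_partialPotential_sub (hf : FourCycleCondition f) (y : ∀ l, X l) (i : Fin N)
    (a : X i) {m : ℕ} (hm : m ≤ N) :
    f i (prefixProfile x₀ (update y i a) m) - f i (prefixProfile x₀ y m)
      = partialPotential x₀ f m (update y i a) - partialPotential x₀ f m y := by
  induction m with
  | zero => simp [prefixProfile_zero, partialPotential_zero]
  | succ m ih =>
    have hmN : m < N := hm
    have ih := ih hmN.le
    rw [partialPotential_succ x₀ f hmN, partialPotential_succ x₀ f hmN,
      prefixProfile_succ x₀ _ hmN, prefixProfile_succ x₀ _ hmN]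
    rcases lt_trichotomy (i : ℕ) m with him | rfl | hmi
    · have hne : (⟨m, hmN⟩ : Fin N) ≠ i := Fin.ne_of_val_ne (Nat.ne_of_gt him)
      rw [update_of_ne hne, prefixProfile_update_of_lt x₀ y i a him] at *
      have hcycle := hf i ⟨m, hmN⟩ him (prefixProfile x₀ y m) a (y ⟨m, hmN⟩)
      linarith
    · rw [prefixProfile_update_of_le x₀ y i a le_rfl] at *
      simp only [Fin.eta, update_self]
      linarith
    · have hne : (⟨m, hmN⟩ : Fin N) ≠ i := Fin.ne_of_val_ne (Nat.ne_of_lt hmi)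
      rw [update_of_ne hne, prefixProfile_update_of_le x₀ y i a hmi.le] at *
      linarith

theorem update_sub_eq_partialPotential_sub (hf : FourCycleCondition f) (i : Fin N)
    (y : ∀ l, X l) (a : X i) :
    f i (update y i a) - f i y
      = partialPotential x₀ f N (update y i a) - partialPotential x₀ f N y := by
  simpa only [prefixProfile_self] using sub_eq_partialPotential_sub x₀ hf y i a le_rfl

end FourCycle

section PairwiseDifference

variable {N : ℕ} {n : Fin N → ℕ} (f : Fin N → (∀ i, EuclideanSpace ℝ (Fin (n i))) → ℝ)

theorem hij_sub_sub (i j : Fin N) (z : ∀ k, EuclideanSpace ℝ (Fin (n k)))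
    (a : EuclideanSpace ℝ (Fin (n i))) (b : EuclideanSpace ℝ (Fin (n j))) :
    hij f i j z (a - z i) (b - z j)
      = f i (update z i a) - f i z + f j (update (update z i a) j b) - f j (update z i a) := by
  simp only [hij, add_sub_cancel]

variable {f}

theorem hij_eq_sub_of_isGlobalPotential {φ : (∀ i, EuclideanSpace ℝ (Fin (n i))) → ℝ}
    (hφ : IsGlobalPotential f φ) (i j : Fin N) (z : ∀ k, EuclideanSpace ℝ (Fin (n k)))
    (u : EuclideanSpace ℝ (Fin (n i))) (v : EuclideanSpace ℝ (Fin (n j))) :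
    hij f i j z u v = φ (update (update z i (z i + u)) j (z j + v)) - φ z := by
  have hi := hφ i z (z i + u)
  have hj := hφ j (update z i (z i + u)) (z j + v)
  simp only [hij]
  linarith

/-- Both halves of a four-cycle are paths of the shape measured by `hij`, and the hypothesis
writes them as opposite differences of values of `hij` at the same base point. -/
theorem fourCycleCondition_of_hij
    (h : ∀ i j : Fin N, i < j → ∀ z : ∀ k, EuclideanSpace ℝ (Fin (n k)),
      ∀ (yi : EuclideanSpace ℝ (Fin (n i))) (yj : EuclideanSpace ℝ (Fin (n j))),
        hij f i j z yi yj
          = hij f i j (update (update z i 0) j 0) (z i + yi) (z j + yj)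
            - hij f i j (update (update z i 0) j 0) (z i) (z j)) :
    FourCycleCondition f := by
  intro i k hik z a b
  have hki : k ≠ i := hik.ne'
  set w := update (update z i a) k b with hw
  have hwi : w i = a := by rw [hw, update_of_ne hki.symm, update_self]
  have hwk : w k = b := update_self ..
  have hbase : update (update w i 0) k 0 = update (update z i 0) k 0 := by
    rw [hw, update_comm hki, update_idem, update_idem]
  have hwz : update w i (z i) = update z k b := by
    rw [hw, update_comm hki, update_idem, update_eq_self]
  have hwzz : update (update z k b) k (z k) = z := by
    rw [update_idem, update_eq_self]
  have there := h i k hik z (a - z i) (b - z k)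
  have back := h i k hik w (z i - w i) (z k - w k)
  rw [add_sub_cancel, add_sub_cancel, hij_sub_sub] at there back
  rw [hbase, hwz, hwzz, hwi, hwk] at back
  linarith

end PairwiseDifference

theorem stmt9_general {N : ℕ} {n : Fin N → ℕ}
    (f : Fin N → (∀ i, EuclideanSpace ℝ (Fin (n i))) → ℝ) :
    (∃ φ, IsGlobalPotential f φ) ↔
      ∀ i j : Fin N, i < j → ∀ z : ∀ k, EuclideanSpace ℝ (Fin (n k)),
        ∀ (yi : EuclideanSpace ℝ (Fin (n i))) (yj : EuclideanSpace ℝ (Fin (n j))),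
          hij f i j z yi yj
            = hij f i j (Function.update (Function.update z i 0) j 0) (z i + yi) (z j + yj)
              - hij f i j (Function.update (Function.update z i 0) j 0) (z i) (z j) := by
  constructor
  · rintro ⟨φ, hφ⟩ i j hlt z yi yj
    set w := update (update z i 0) j 0 with hw
    have hwi : w i = 0 := by rw [hw, update_of_ne hlt.ne, update_self]
    have hwj : w j = 0 := update_self ..
    have hupdate : ∀ u v, update (update w i u) j v = update (update z i u) j v := fun u v => by
      rw [hw, update_comm hlt.ne', update_idem, update_idem, update_comm hlt.ne]
    simp only [hij_eq_sub_of_isGlobalPotential hφ, hwi, hwj, zero_add, hupdate, update_eq_self]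
    ring
  · exact fun h => ⟨_, update_sub_eq_partialPotential_sub 0 (fourCycleCondition_of_hij h)⟩

/-- If the costs are defined on all of `ℝ^{n̄}`, the game is a potential
game iff for all players `i < j` and all `z_i, y_i, z_j, y_j, z₋`,
`h_{ij}(z_i,z_j,y_i,y_j;z₋) = h_{ij}(0,0,z_i+y_i,z_j+y_j;z₋) − h_{ij}(0,0,z_i,z_j;z₋)`. -/
theorem stmt9 {N : ℕ} {n : Fin N → ℕ}
    (K : ∀ i, Set (EuclideanSpace ℝ (Fin (n i))))
    (f : Fin N → (∀ i, EuclideanSpace ℝ (Fin (n i))) → ℝ) :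
    (∃ φ, IsGlobalPotential f φ) ↔
      ∀ i j : Fin N, i < j → ∀ z : ∀ k, EuclideanSpace ℝ (Fin (n k)),
        ∀ (yi : EuclideanSpace ℝ (Fin (n i))) (yj : EuclideanSpace ℝ (Fin (n j))),
          hij f i j z yi yj
            = hij f i j (Function.update (Function.update z i 0) j 0) (z i + yi) (z j + yj)
              - hij f i j (Function.update (Function.update z i 0) j 0) (z i) (z j) :=
  stmt9_general f
end
end

section
/- Let an N-player potential game with N = 2k+1 odd (k ≥ 1) have strategy sets K_i ⊆ ℝ^{n_i} with 0 ∈ K and each K_i symmetric, and let φ be a potential function. Then for every z ∈ K, φ(z) = φ(0) + h_{P₃}(0, (z_1, z_2, z_3)) + Σ_{i=2}^{k} h_{2i,2i+1}(0, 0, z_{2i}, z_{2i+1}; ẑ_{2i−1}), where ẑ_m = (z_1, …, z_m, 0, …, 0), h_{P₃}(0, (z_1,z_2,z_3)) = [f_1(z_1, 0, …, 0) − f_1(0)] + [f_2(z_1, z_2, 0, …, 0) − f_2(z_1, 0, …, 0)] + [f_3(z_1, z_2, z_3, 0, …, 0) − f_3(z_1, z_2, 0, …, 0)], and h_{ij}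 is the pairwise incremental cost difference function. -/
noncomputable section

/-- `trunc z m` : the profile `ẑ_m = (z_1, …, z_m, 0, …, 0)`. -/
def trunc {N : ℕ} {n : Fin N → ℕ}
    (z : ∀ k, EuclideanSpace ℝ (Fin (n k))) (m : ℕ) :
    ∀ k, EuclideanSpace ℝ (Fin (n k)) :=
  fun j => if (j : ℕ) < m then z j else 0

/-!
Along the path of prefix profiles `ẑ_0 = 0, ẑ_1, …, ẑ_N = z`, which stays in `K`, consecutive
profiles differ only in the strategy of one player, so the potential property turns each cost
increment along the path into the corresponding increment of `φ`. The term `h_{P₃}` collects the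
first three steps and `h_{2i,2i+1}(0, 0, z_{2i}, z_{2i+1}; ẑ_{2i−1})` the two steps from `ẑ_{2i−1}`
to `ẑ_{2i+1}`, so the right-hand side telescopes to `φ(z)`.
-/

section Trunc

variable {N : ℕ} {n : Fin N → ℕ} (z : ∀ k, EuclideanSpace ℝ (Fin (n k)))

theorem trunc_zero : trunc z 0 = 0 := by
  funext j
  simp [trunc]

theorem trunc_of_le {m : ℕ} (hm : N ≤ m) : trunc z m = z := by
  funext j
  simp [trunc, show (j : ℕ) < m by omega]

theorem trunc_apply_of_le {m : ℕ} {j : Fin N} (hj : m ≤ j) : trunc z m j = 0 := by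
  simp [trunc, show ¬ (j : ℕ) < m by omega]

theorem update_trunc_self (i : Fin N) :
    Function.update (trunc z i) i (z i) = trunc z (i + 1) := by
  funext j
  rcases eq_or_ne j i with rfl | hji
  · simp [trunc]
  · simp [hji, trunc, le_iff_lt_or_eq, Fin.val_ne_of_ne hji]

theorem trunc_mem_jointK {K : ∀ i, Set (EuclideanSpace ℝ (Fin (n i)))}
    (h0 : (0 : ∀ i, EuclideanSpace ℝ (Fin (n i))) ∈ jointK K) (hz : z ∈ jointK K) (m : ℕ) :
    trunc z m ∈ jointK K := by
  intro j
  by_cases hj : (j : ℕ) < m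
  · simpa [trunc, hj] using hz j
  · simpa [trunc, hj] using h0 j

end Trunc

namespace IsPotential

variable {N : ℕ} {n : Fin N → ℕ} {K : ∀ i, Set (EuclideanSpace ℝ (Fin (n i)))}
  {f : Fin N → (∀ i, EuclideanSpace ℝ (Fin (n i))) → ℝ}
  {φ : (∀ i, EuclideanSpace ℝ (Fin (n i))) → ℝ} {z : ∀ k, EuclideanSpace ℝ (Fin (n k))}

theorem cost_trunc_succ_sub (hφ : IsPotential K f φ)
    (h0 : (0 : ∀ i, EuclideanSpace ℝ (Fin (n i))) ∈ jointK K) (hz : z ∈ jointK K) (i : Fin N) :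
    f i (trunc z (i + 1)) - f i (trunc z i) = φ (trunc z (i + 1)) - φ (trunc z i) := by
  have h := hφ i (trunc z i) (trunc_mem_jointK z h0 hz i) (z i) (hz i)
  rwa [update_trunc_self] at h

theorem hij_trunc (hφ : IsPotential K f φ)
    (h0 : (0 : ∀ i, EuclideanSpace ℝ (Fin (n i))) ∈ jointK K) (hz : z ∈ jointK K)
    {i j : Fin N} (hji : (j : ℕ) = i + 1) :
    hij f i j (trunc z i) (z i) (z j) = φ (trunc z (j + 1)) - φ (trunc z i) := by
  have hstep_i := hφ.cost_trunc_succ_sub h0 hz i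
  have hstep_j := hφ.cost_trunc_succ_sub h0 hz j
  rw [← hji] at hstep_i
  unfold hij
  rw [trunc_apply_of_le z le_rfl, trunc_apply_of_le z (by omega), zero_add, zero_add,
    update_trunc_self, ← hji, update_trunc_self z j]
  linarith

end IsPotential

theorem sum_Icc_two_odd_telescope {G : Type*} [AddCommGroup G] (g : ℕ → G) {k : ℕ} (hk : 1 ≤ k) :
    ∑ i ∈ Finset.Icc 2 k, (g (2 * i + 1) - g (2 * i - 1)) = g (2 * k + 1) - g 3 := by
  induction k, hk using Nat.le_induction with
  | base => simp
  | succ k hk ih =>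
    rw [Finset.sum_Icc_succ_top (by omega), ih, show 2 * (k + 1) - 1 = 2 * k + 1 by omega]
    abel

/-- In a potential game with an odd number `N = 2k+1` of players
(`k ≥ 1`), with `0 ∈ K` and symmetric strategy sets, every potential function `φ`
satisfies
`φ(z) = φ(0) + h_{P₃}(0,(z₁,z₂,z₃)) + ∑_{i=2}^{k} h_{2i,2i+1}(0,0,z_{2i},z_{2i+1};ẑ_{2i−1})`.
(Players are `1`-indexed in the informal statement; here player `m` is index `m−1`.) -/
theorem stmt10 {N k : ℕ} {n : Fin N → ℕ} (hN : N = 2 * k + 1) (hk : 1 ≤ k)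
    (K : ∀ i, Set (EuclideanSpace ℝ (Fin (n i))))
    (f : Fin N → (∀ i, EuclideanSpace ℝ (Fin (n i))) → ℝ)
    (h0 : (0 : ∀ i, EuclideanSpace ℝ (Fin (n i))) ∈ jointK K)
    (φ : (∀ i, EuclideanSpace ℝ (Fin (n i))) → ℝ)
    (hφ : IsPotential K f φ) :
    ∀ z ∈ jointK K,
      φ z = φ 0
        + ((f ⟨0, by omega⟩ (trunc z 1) - f ⟨0, by omega⟩ (trunc z 0))
            + (f ⟨1, by omega⟩ (trunc z 2) - f ⟨1, by omega⟩ (trunc z 1))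
            + (f ⟨2, by omega⟩ (trunc z 3) - f ⟨2, by omega⟩ (trunc z 2)))
        + ∑ i ∈ (Finset.Icc 2 k).attach,
            hij f ⟨2 * i.1 - 1, by have := Finset.mem_Icc.mp i.2; omega⟩
                  ⟨2 * i.1, by have := Finset.mem_Icc.mp i.2; omega⟩
                  (trunc z (2 * i.1 - 1))
                  (z ⟨2 * i.1 - 1, by have := Finset.mem_Icc.mp i.2; omega⟩)
                  (z ⟨2 * i.1, by have := Finset.mem_Icc.mp i.2; omega⟩) := by
  intro z hz
  have hstep (m : ℕ) (hm : m < N) :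
      f ⟨m, hm⟩ (trunc z (m + 1)) - f ⟨m, hm⟩ (trunc z m) = φ (trunc z (m + 1)) - φ (trunc z m) :=
    hφ.cost_trunc_succ_sub h0 hz ⟨m, hm⟩
  have hpair (i : Finset.Icc 2 k) :=
    hφ.hij_trunc h0 hz (i := ⟨2 * i.1 - 1, by grind⟩) (j := ⟨2 * i.1, by grind⟩) (by grind)
  have hpairs := Finset.sum_congr rfl fun i (_ : i ∈ (Finset.Icc 2 k).attach) => hpair i
  rw [hpairs,
    Finset.sum_attach (Finset.Icc 2 k) fun i => φ (trunc z (2 * i + 1)) - φ (trunc z (2 * i - 1)),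
    sum_Icc_two_odd_telescope (fun m => φ (trunc z m)) hk, ← hN, trunc_of_le z le_rfl,
    ← trunc_zero z]
  linarith [hstep 0 (by omega), hstep 1 (by omega), hstep 2 (by omega)]
end
end

section
/- Consider an N-player game with strategy sets K_i and cost functions f_i, and suppose that for all players i, j, all x_i, x_i + y_i ∈ K_i, all x_j, x_j + y_j ∈ K_j, and all x_{-{i,j}} ∈ K_{-{i,j}}, it holds that f_i(x_i + y_i, x_j + y_j, x_{-{i,j}}) − f_i(x_i, x_{-i}) < 0 if and only if f_j(x_j + y_j, x_i + y_i, x_{-{i,j}}) − f_j(x_j, x_{-j}) < 0. Then the game is an ordinal potential game, and for every player i the cost function f_i itself is an ordinal potential function. -/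
noncomputable section

/-- `φ` is an ordinal potential function for the game with strategy sets `K`, costs `f`. -/
def IsOrdinalPotential {N : ℕ} {n : Fin N → ℕ}
    (K : ∀ i, Set (EuclideanSpace ℝ (Fin (n i))))
    (f : Fin N → (∀ i, EuclideanSpace ℝ (Fin (n i))) → ℝ)
    (φ : (∀ i, EuclideanSpace ℝ (Fin (n i))) → ℝ) : Prop :=
  ∀ i : Fin N, ∀ x ∈ jointK K, ∀ xi' ∈ K i,
    (f i (Function.update x i xi') - f i x < 0 ↔
      φ (Function.update x i xi') - φ x < 0)

theorem Function.update_update_self_of_ne {ι : Type*} [DecidableEq ι] {β : ι → Type*}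
    (x : ∀ i, β i) {i j : ι} (hij : i ≠ j) (a : β i) :
    Function.update (Function.update x i a) j (x j) = Function.update x i a := by
  conv_lhs => rw [← Function.update_of_ne hij.symm a x]
  exact Function.update_eq_self j _

/-- Taking `y_j = 0` in the joint-deviation condition shows that `f i` and `f j` change sign
together under every unilateral deviation of player `i`. -/
theorem isOrdinalPotential_cost_of_joint_deviation {N : ℕ} {n : Fin N → ℕ}
    (K : ∀ i, Set (EuclideanSpace ℝ (Fin (n i))))
    (f : Fin N → (∀ i, EuclideanSpace ℝ (Fin (n i))) → ℝ)
    (h : ∀ i j : Fin N, i ≠ j → ∀ x ∈ jointK K,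
      ∀ (yi : EuclideanSpace ℝ (Fin (n i))) (yj : EuclideanSpace ℝ (Fin (n j))),
        x i + yi ∈ K i → x j + yj ∈ K j →
        (f i (Function.update (Function.update x i (x i + yi)) j (x j + yj)) - f i x < 0 ↔
         f j (Function.update (Function.update x i (x i + yi)) j (x j + yj)) - f j x < 0))
    (j : Fin N) : IsOrdinalPotential K f (f j) := by
  intro i x hx xi' hxi'
  rcases eq_or_ne i j with rfl | hij
  · rfl
  · have hdev := h i j hij x hx (xi' - x i) 0 (by rwa [add_sub_cancel]) (by rw [add_zero]; exact hx j)
    rwa [add_sub_cancel, add_zero, Function.update_update_self_of_ne x hij] at hdev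

/-- If for all pairs of distinct players `i, j` the simultaneous
deviation sign condition
`f_i(x_i+y_i, x_j+y_j, x₋) − f_i(x) < 0 ⇔ f_j(x_j+y_j, x_i+y_i, x₋) − f_j(x) < 0`
holds, then the game is an ordinal potential game, and each cost `f i` is itself an
ordinal potential function. -/
theorem stmt12 {N : ℕ} {n : Fin N → ℕ}
    (K : ∀ i, Set (EuclideanSpace ℝ (Fin (n i))))
    (f : Fin N → (∀ i, EuclideanSpace ℝ (Fin (n i))) → ℝ)
    (h : ∀ i j : Fin N, i ≠ j → ∀ x ∈ jointK K,
      ∀ (yi : EuclideanSpace ℝ (Fin (n i))) (yj : EuclideanSpace ℝ (Fin (n j))),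
        x i + yi ∈ K i → x j + yj ∈ K j →
        (f i (Function.update (Function.update x i (x i + yi)) j (x j + yj)) - f i x < 0 ↔
         f j (Function.update (Function.update x i (x i + yi)) j (x j + yj)) - f j x < 0)) :
    (∃ φ, IsOrdinalPotential K f φ) ∧ ∀ i : Fin N, IsOrdinalPotential K f (f i) := by
  have hcost := isOrdinalPotential_cost_of_joint_deviation K f h
  refine ⟨?_, hcost⟩
  rcases isEmpty_or_nonempty (Fin N) with hempty | ⟨⟨i⟩⟩
  · exact ⟨0, fun i => isEmptyElim i⟩
  · exact ⟨f i, hcost i⟩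
end
end

section
/- Consider an N-player game where each strategy set K_i ⊆ ℝ^{n_i} is convex and each cost function f_i(·, x_{-i}) is continuously differentiable and strictly convex on K_i for every x_{-i} ∈ K_{-i} (i.e., f_i(y_i, x_{-i}) > f_i(x_i, x_{-i}) + ⟨∇_{x_i} f_i(x_i, x_{-i}), y_i − x_i⟩ for all x_i ≠ y_i in K_i). Suppose there exists a function φ : K → ℝ such that for every player i, all x_i, y_i ∈ K_i with x_i ≠ y_i and all x_{-i} ∈ K_{-i}, whenever ⟨∇_{x_i} f_i(x_i, x_{-i}), y_i − x_i⟩ < 0 there exists a vector s_i(x_i, x_{-i}) satisfying both the concavity subgradient inequality φ(y_i, x_{-i}) ≤ φ(x_i, x_{-i}) + ⟨s_i(x_i, x_{-i}), y_i − x_i⟩ and the bound ⟨s_i(x_i, x_{-i}), y_i − x_i⟩ ≤ ⟨∇_{x_i} f_i(x_i, x_{-i}), y_i − x_i⟩. Then φ is a generalized ordinal potential function for the game. -/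
noncomputable section

open RealInnerProductSpace

/-- The partial gradient of `g` with respect to player `i`'s variable, at `x`. -/
noncomputable def blockGrad {N : ℕ} {n : Fin N → ℕ}
    (g : (∀ k, EuclideanSpace ℝ (Fin (n k))) → ℝ)
    (x : ∀ k, EuclideanSpace ℝ (Fin (n k))) (i : Fin N) :
    EuclideanSpace ℝ (Fin (n i)) :=
  gradient (fun v => g (Function.update x i v)) (x i)

/-- `φ` is a generalized ordinal potential function for the game `(K, f)`. -/
def IsGenOrdinalPotential {N : ℕ} {n : Fin N → ℕ}
    (K : ∀ i, Set (EuclideanSpace ℝ (Fin (n i))))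
    (f : Fin N → (∀ i, EuclideanSpace ℝ (Fin (n i))) → ℝ)
    (φ : (∀ i, EuclideanSpace ℝ (Fin (n i))) → ℝ) : Prop :=
  ∀ i : Fin N, ∀ x ∈ jointK K, ∀ xi' ∈ K i,
    f i (Function.update x i xi') - f i x < 0 →
      φ (Function.update x i xi') - φ x < 0

/-- In a game with convex strategy sets and costs that are continuously
differentiable and strictly convex in each player's own variable, if `φ` is such that
along every improving direction there is a subgradient-type vector `s` with
`φ(y_i,x₋ᵢ) ≤ φ(x) + ⟪s, y_i−x_i⟫` and `⟪s, y_i−x_i⟫ ≤ ⟪∇_{x_i}f_i(x), y_i−x_i⟫`,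
then `φ` is a generalized ordinal potential function of the game. -/
theorem stmt14 {N : ℕ} {n : Fin N → ℕ}
    (K : ∀ i, Set (EuclideanSpace ℝ (Fin (n i))))
    (f : Fin N → (∀ i, EuclideanSpace ℝ (Fin (n i))) → ℝ)
    (hKconv : ∀ i, Convex ℝ (K i))
    (hfC1 : ∀ (i : Fin N) (x : ∀ k, EuclideanSpace ℝ (Fin (n k))),
      ContDiffOn ℝ 1 (fun v => f i (Function.update x i v)) (K i))
    (hstrict : ∀ i : Fin N, ∀ x ∈ jointK K, ∀ yi ∈ K i, yi ≠ x i →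
      f i (Function.update x i yi) >
        f i x + ⟪blockGrad (f i) x i, yi - x i⟫)
    (φ : (∀ i, EuclideanSpace ℝ (Fin (n i))) → ℝ)
    (hs : ∀ i : Fin N, ∀ x ∈ jointK K, ∀ yi ∈ K i, yi ≠ x i →
      ⟪blockGrad (f i) x i, yi - x i⟫ < 0 →
        ∃ s : EuclideanSpace ℝ (Fin (n i)),
          φ (Function.update x i yi) ≤ φ x + ⟪s, yi - x i⟫ ∧
          ⟪s, yi - x i⟫ ≤ ⟪blockGrad (f i) x i, yi - x i⟫) :
    IsGenOrdinalPotential K f φ := by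
  intro i x hx xi' hxi' hdec
  have hne : xi' ≠ x i := by
    rintro rfl
    simp at hdec
  have hconv := hstrict i x hx xi' hxi' hne
  have hgrad : ⟪blockGrad (f i) x i, xi' - x i⟫ < 0 := by linarith
  obtain ⟨s, h1, h2⟩ := hs i x hx xi' hxi' hne hgrad
  linarith
end
end

section
/- Consider an N-player game where each strategy set K_i ⊆ ℝ^{n_i} is convex and each cost function f_i(·, x_{-i}) is continuously differentiable and strictly convex on K_i for every x_{-i} ∈ K_{-i} (i.e., f_i(y_i, x_{-i}) > f_i(x_i, x_{-i}) + ⟨∇_{x_i} f_i(x_i, x_{-i}), y_i − x_i⟩ for all x_i ≠ y_i in K_i). Suppose there exists a function φ : K → ℝ such that for every player i, all x_i, y_i ∈ K_i with x_i ≠ y_i, and all x_{-i} ∈ K_{-i}, whenever ⟨∇_{x_i} f_i(x_i, x_{-i}), y_i − x_i⟩ < 0 there exist a vector s_i(x_i, x_{-i}) and a scalar α_i(x) > 0 satisfying both φ(y_i, x_{-i}) ≤ φ(x_i, x_{-i}) + ⟨s_i(x_i, x_{-i}), y_i − x_i⟩ and ⟨s_i(x_i, x_{-i}), y_i − x_i⟩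 ≤ α_i(x) ⟨∇_{x_i} f_i(x_i, x_{-i}), y_i − x_i⟩. Then φ is a generalized ordinal potential function for the game. -/
noncomputable section

open RealInnerProductSpace

/-- In a game with convex strategy sets and costs that are continuously
differentiable and strictly convex in each player's own variable, if `φ` is such that
along every improving direction there are a vector `s` and a scalar `α > 0` with
`φ(y_i,x₋ᵢ) ≤ φ(x) + ⟪s, y_i−x_i⟫` and `⟪s, y_i−x_i⟫ ≤ α⟪∇_{x_i}f_i(x), y_i−x_i⟫`,
then `φ` is a generalized ordinal potential function of the game. -/
theorem stmt15 {N : ℕ} {n : Fin N → ℕ}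
    (K : ∀ i, Set (EuclideanSpace ℝ (Fin (n i))))
    (f : Fin N → (∀ i, EuclideanSpace ℝ (Fin (n i))) → ℝ)
    (hKconv : ∀ i, Convex ℝ (K i))
    (hfC1 : ∀ (i : Fin N) (x : ∀ k, EuclideanSpace ℝ (Fin (n k))),
      ContDiffOn ℝ 1 (fun v => f i (Function.update x i v)) (K i))
    (hstrict : ∀ i : Fin N, ∀ x ∈ jointK K, ∀ yi ∈ K i, yi ≠ x i →
      f i (Function.update x i yi) >
        f i x + ⟪blockGrad (f i) x i, yi - x i⟫)
    (φ : (∀ i, EuclideanSpace ℝ (Fin (n i))) → ℝ)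
    (hs : ∀ i : Fin N, ∀ x ∈ jointK K, ∀ yi ∈ K i, yi ≠ x i →
      ⟪blockGrad (f i) x i, yi - x i⟫ < 0 →
        ∃ (s : EuclideanSpace ℝ (Fin (n i))) (α : ℝ), 0 < α ∧
          φ (Function.update x i yi) ≤ φ x + ⟪s, yi - x i⟫ ∧
          ⟪s, yi - x i⟫ ≤ α * ⟪blockGrad (f i) x i, yi - x i⟫) :
    IsGenOrdinalPotential K f φ := by
  intro i x hx xi' hxi' hlt
  have hne : xi' ≠ x i := by
    intro h
    rw [h, Function.update_eq_self] at hlt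
    simp at hlt
  have hg := hstrict i x hx xi' hxi' hne
  have hgrad : ⟪blockGrad (f i) x i, xi' - x i⟫ < 0 := by linarith
  obtain ⟨s, α, hα, h1, h2⟩ := hs i x hx xi' hxi' hne hgrad
  have : α * ⟪blockGrad (f i) x i, xi' - x i⟫ < 0 :=
    mul_neg_of_pos_of_neg hα hgrad
  linarith
end
end

section
/- Consider a network congestion game with N players and a finite set E of links, where each player i chooses a path x_i (a finite subset of E) from a common finite collection P of paths, each link e ∈ E has a cost function C_e : ℕ → ℝ, the congestion of link e under profile x = (x_1,…,x_N) is v_e(x) = |{ j : e ∈ x_j }|, and player i's cost is f_i(x) = Σ_{e ∈ x_i} C_e(v_e(x)). Then the function φ(x) = Σ_{e ∈ E} Σ_{k=1}^{v_e(x)} C_e(k) is an exact potential function: for every player i, every two paths x_i, x'_i ∈ P, and every profile x_{-i} of the other players, f_i(x'_i, x_{-i}) − f_i(x_i, x_{-i}) = φ(x'_i, x_{-i}) − φ(x_i, x_{-i}). -/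
noncomputable section

/-- The congestion `v_e(x)` of link `e`: the number of players whose path contains `e`. -/
def congestion {N : ℕ} {E : Type*} [Fintype E] [DecidableEq E]
    (x : Fin N → Finset E) (e : E) : ℕ :=
  (Finset.univ.filter fun j => e ∈ x j).card

/-- Player `i`'s cost in the network congestion game:
`f_i(x) = ∑_{e ∈ x_i} C_e(v_e(x))`. -/
def congestionCost {N : ℕ} {E : Type*} [Fintype E] [DecidableEq E]
    (C : E → ℕ → ℝ) (i : Fin N) (x : Fin N → Finset E) : ℝ :=
  ∑ e ∈ x i, C e (congestion x e)

/-- Rosenthal's potential `φ(x) = ∑_{e ∈ E} ∑_{k=1}^{v_e(x)} C_e(k)`. -/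
def rosenthalPot {N : ℕ} {E : Type*} [Fintype E] [DecidableEq E]
    (C : E → ℕ → ℝ) (x : Fin N → Finset E) : ℝ :=
  ∑ e : E, ∑ k ∈ Finset.Icc 1 (congestion x e), C e k

/-!
Fix player `i` and split the congestion of each link as `v_e(x) = w_e + [e ∈ x_i]`, where `w_e`
counts the other players on `e` and does not depend on `x_i`. Peeling the top term off
`∑_{k=1}^{v_e} C_e(k)` when `e ∈ x_i` shows `φ(x) = f_i(x) + ∑_e ∑_{k=1}^{w_e} C_e(k)`, and the
second summand is unchanged by a unilateral deviation of player `i`.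
-/

open Finset

section

variable {N : ℕ} {E : Type*} [DecidableEq E]

def congestionOthers (x : Fin N → Finset E) (i : Fin N) (e : E) : ℕ :=
  #{j ∈ univ.erase i | e ∈ x j}

theorem congestionOthers_update (x : Fin N → Finset E) (i : Fin N) (s : Finset E) :
    congestionOthers (Function.update x i s) i = congestionOthers x i := by
  ext e
  refine congrArg card (filter_congr fun j hj => ?_)
  rw [Function.update_of_ne (ne_of_mem_erase hj)]

variable [Fintype E]

theorem congestion_eq_congestionOthers_add (x : Fin N → Finset E) (i : Fin N) (e : E) :
    congestion x e = congestionOthers x i e + if e ∈ x i then 1 else 0 := by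
  rw [congestion, congestionOthers, card_filter, card_filter,
    ← sum_erase_add _ _ (mem_univ i)]

theorem sum_Icc_congestion_eq (C : ℕ → ℝ) (x : Fin N → Finset E) (i : Fin N) (e : E) :
    ∑ k ∈ Icc 1 (congestion x e), C k
      = (if e ∈ x i then C (congestion x e) else 0)
        + ∑ k ∈ Icc 1 (congestionOthers x i e), C k := by
  rw [congestion_eq_congestionOthers_add x i e]
  split_ifs
  · rw [sum_Icc_succ_top (Nat.le_add_left 1 _), add_comm]
  · simp

theorem congestionCost_eq_sum_ite (C : E → ℕ → ℝ) (i : Fin N) (x : Fin N → Finset E) :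
    congestionCost C i x = ∑ e, if e ∈ x i then C e (congestion x e) else 0 := by
  rw [congestionCost, sum_ite_mem, univ_inter]

theorem rosenthalPot_eq_congestionCost_add (C : E → ℕ → ℝ) (i : Fin N) (x : Fin N → Finset E) :
    rosenthalPot C x
      = congestionCost C i x + ∑ e, ∑ k ∈ Icc 1 (congestionOthers x i e), C e k := by
  simp only [rosenthalPot, congestionCost_eq_sum_ite, sum_Icc_congestion_eq _ x i, sum_add_distrib]

end

/-- In a network congestion game with `N` players, a finite link set
`E`, a common finite collection `P` of paths, and link costs `C e : ℕ → ℝ`, Rosenthal's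
function is an exact potential function. -/
theorem stmt18 {N : ℕ} {E : Type*} [Fintype E] [DecidableEq E]
    (P : Finset (Finset E)) (C : E → ℕ → ℝ) :
    ∀ (i : Fin N) (x : Fin N → Finset E), (∀ j, x j ∈ P) → ∀ xi' ∈ P,
      congestionCost C i (Function.update x i xi') - congestionCost C i x
        = rosenthalPot C (Function.update x i xi') - rosenthalPot C x := by
  intro i x _ xi' _
  rw [rosenthalPot_eq_congestionCost_add C i, rosenthalPot_eq_congestionCost_add C i x,
    congestionOthers_update, add_sub_add_right_eq_sub]
end
end

section
/- Consider the two-player game with strategy sets K_1 = K_2 = (0, 1] ⊆ ℝ and cost functions f_1(x_1, x_2) = (x_1 + x_2)² and f_2(x_1, x_2) = (x_1 + x_2)⁶. For any constants a ≥ 8 and b ≥ 6·2⁶, the function φ(x_1, x_2) = a√x_1 + b√x_2 is a generalized ordinal potential function for this game: for each player i ∈ {1,2}, all x_i, x'_i ∈ (0,1] and all x_{-i} ∈ (0,1], if f_i(x'_i, x_{-i}) − f_i(x_i, x_{-i}) < 0 then φ(x'_i, x_{-i}) − φ(x_i, x_{-i}) < 0. -/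
/-! Both costs `(x₁ + x₂)ⁿ` are strictly increasing in the deviating player's own strategy on
the positive quadrant, and so is that player's summand `c √xᵢ` of `φ` when `c > 0`. A strict
unilateral cost decrease therefore means the player lowered their strategy, which lowers `φ`. -/

lemma mul_sqrt_lt_mul_sqrt_of_add_pow_lt {n : ℕ} {c x x' y : ℝ} (hc : 0 < c) (hx' : 0 ≤ x')
    (hxy : 0 ≤ x + y) (h : (x' + y) ^ n < (x + y) ^ n) : c * √x' < c * √x := by
  have hlt : x' < x := by linarith [lt_of_pow_lt_pow_left₀ n hxy h]
  exact mul_lt_mul_of_pos_left (Real.sqrt_lt_sqrt hx' hlt) hc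

/-- For the two-player game on `K₁ = K₂ = (0,1]` with costs
`f₁(x₁,x₂) = (x₁+x₂)²` and `f₂(x₁,x₂) = (x₁+x₂)⁶`, and any constants `a ≥ 8` and
`b ≥ 6·2⁶`, the function `φ(x₁,x₂) = a√x₁ + b√x₂` is a generalized ordinal potential
function: a unilateral strict cost decrease forces a strict decrease of `φ`. -/
theorem stmt19 (a b : ℝ) (ha : 8 ≤ a) (hb : 6 * 2 ^ 6 ≤ b) :
    (∀ x1 ∈ Set.Ioc (0 : ℝ) 1, ∀ x1' ∈ Set.Ioc (0 : ℝ) 1, ∀ x2 ∈ Set.Ioc (0 : ℝ) 1,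
      (x1' + x2) ^ 2 - (x1 + x2) ^ 2 < 0 →
      (a * Real.sqrt x1' + b * Real.sqrt x2) - (a * Real.sqrt x1 + b * Real.sqrt x2) < 0)
    ∧ (∀ x2 ∈ Set.Ioc (0 : ℝ) 1, ∀ x2' ∈ Set.Ioc (0 : ℝ) 1, ∀ x1 ∈ Set.Ioc (0 : ℝ) 1,
      (x1 + x2') ^ 6 - (x1 + x2) ^ 6 < 0 →
      (a * Real.sqrt x1 + b * Real.sqrt x2') - (a * Real.sqrt x1 + b * Real.sqrt x2) < 0) := by
  have ha0 : 0 < a := by linarith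
  have hb0 : 0 < b := by linarith
  constructor
  · intro x1 hx1 x1' hx1' x2 hx2 h
    have := mul_sqrt_lt_mul_sqrt_of_add_pow_lt ha0 hx1'.1.le (by linarith [hx1.1, hx2.1])
      (sub_neg.mp h)
    linarith
  · intro x2 hx2 x2' hx2' x1 hx1 h
    rw [add_comm x1, add_comm x1] at h
    have := mul_sqrt_lt_mul_sqrt_of_add_pow_lt hb0 hx2'.1.le (by linarith [hx1.1, hx2.1])
      (sub_neg.mp h)
    linarith
end
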